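/- Let P : ℝ → ℝ be a positive differentiable function satisfying P' = X·P + U, where lim_{η→∞} X(η) = -1 and lim_{η→∞} U(η) = 0. Then lim_{η→∞} P(η) = 0. -/

import Mathlib

/-!
Eventually `X ≤ -1/2` and `U ≤ ε/8`, so `P' ≤ -ε/8` wherever `P ≥ ε/2`. Hence `P` must drop
below `ε/2` at some time, and afterwards it can never climb back above that level.
-/

open Filter Set

theorem exists_le_of_deriv_le_neg_of_le {f : ℝ → ℝ} (hf : Differentiable ℝ f) {a c κ : ℝ}
    (hκ : 0 < κ) (hderiv : ∀ x, a ≤ x → c ≤ f x → deriv f x ≤ -κ) :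
    ∃ b, a ≤ b ∧ f b ≤ c := by
  by_contra! habove
  -- Then `f` decreases at rate `κ` on `[a, ∞)`, so it is below `c` at `a + (f a - c) / κ`.
  have hdecay := Convex.image_sub_le_mul_sub_of_deriv_le (convex_Ici a)
    hf.continuous.continuousOn hf.differentiableOn
    (fun x hx => hderiv x (interior_Ici.subset hx).le (habove x (interior_Ici.subset hx).le).le)
    a self_mem_Ici (a + (f a - c) / κ)
  have hstep : 0 ≤ (f a - c) / κ := div_nonneg (sub_nonneg.2 (habove a le_rfl).le) hκ.le
  have hfall := hdecay (by simpa using hstep) (by simpa using hstep)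
  have hreach : -κ * (a + (f a - c) / κ - a) = c - f a := by field_simp; ring
  linarith [habove _ (le_add_of_nonneg_right hstep)]

theorem le_of_le_of_deriv_neg_at_level {f : ℝ → ℝ} (hf : Differentiable ℝ f) {b c : ℝ}
    (hb : f b ≤ c) (hderiv : ∀ x, b ≤ x → f x = c → deriv f x < 0) :
    ∀ x, b ≤ x → f x ≤ c := fun _ hx =>
  image_le_of_deriv_right_lt_deriv_boundary (B := fun _ => c) (B' := fun _ => 0)
    hf.continuous.continuousOn (fun y _ => (hf y).hasDerivAt.hasDerivWithinAt) hb
    (fun _ => hasDerivAt_const _ c) (fun y hy hyc => hderiv y hy.1 hyc) ⟨hx, le_rfl⟩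

theorem eventually_le_of_deriv_le_neg {f : ℝ → ℝ} (hf : Differentiable ℝ f) {c κ : ℝ}
    (hκ : 0 < κ) (hderiv : ∀ᶠ x in atTop, c ≤ f x → deriv f x ≤ -κ) :
    ∀ᶠ x in atTop, f x ≤ c := by
  obtain ⟨a, ha⟩ := hderiv.exists_forall_of_atTop
  obtain ⟨b, hab, hb⟩ := exists_le_of_deriv_le_neg_of_le hf hκ ha
  have hstay := le_of_le_of_deriv_neg_at_level hf hb fun x hx hxc =>
    (ha x (hab.trans hx) hxc.ge).trans_lt (neg_neg_of_pos hκ)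
  exact eventually_atTop.2 ⟨b, hstay⟩

/-- Special case `u = 0` of the ODE comparison lemma. -/
theorem stmt_1 (P X U : ℝ → ℝ)
    (hpos : ∀ η, 0 < P η) (hdiff : Differentiable ℝ P)
    (hode : ∀ η, deriv P η = X η * P η + U η)
    (hX : Filter.Tendsto X Filter.atTop (nhds (-1)))
    (hU : Filter.Tendsto U Filter.atTop (nhds 0)) :
    Filter.Tendsto P Filter.atTop (nhds 0) := by
  refine tendsto_order.2 ⟨fun a ha => Eventually.of_forall fun η => ha.trans (hpos η),
    fun ε hε => ?_⟩
  have hX_le : ∀ᶠ η in atTop, X η ≤ -(1 / 2) := hX.eventually (ge_mem_nhds (by norm_num))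
  have hU_le : ∀ᶠ η in atTop, U η ≤ ε / 8 := hU.eventually (ge_mem_nhds (by positivity))
  have hderiv : ∀ᶠ η in atTop, ε / 2 ≤ P η → deriv P η ≤ -(ε / 8) := by
    filter_upwards [hX_le, hU_le] with η hXη hUη hPη
    rw [hode]
    nlinarith [hpos η]
  filter_upwards [eventually_le_of_deriv_le_neg hdiff (by positivity) hderiv] with η hη
  linarith
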